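/- arXiv:1105.1011 — 3 statements merged into one kernel-verified Lean document; each statement's English description precedes it below -/
import Mathlib

section
/- Let q ≥ 1 be an integer, β ∈ ℝ^q, and f : ℝ → [0, ∞] measurable. Then ∫_{ℝ^q} f(y₁+⋯+y_q) ∏_{i=1}^q |y_i|^{β_i} dy = Γ · ∫_ℝ f(s) |s|^{q−1+β₁+⋯+β_q} ds, where Γ = ∏_{i=2}^q ∫_ℝ |t|^{q−i+B_i} |1−t|^{β_{i−1}} dt with B_i = β_i + ⋯ + β_q, under the convention ∞ · 0 = 0. -/
/-!
Induct on `q`, integrating out the first coordinate `x = y₁` last: by induction the remaining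
`q - 1` coordinates, applied to `f (x + ·)`, contribute the last `q - 2` factors of `Γ` times
`∫ f(x + s) |s|^A ds`. What is left is the two-variable identity
`∫∫ h(x + y) |y|^b |x|^a dy dx = (∫ |t|^b |1 - t|^a dt) ∫ h(s) |s|^{a+b+1} ds`,
obtained by substituting `y = s - x`, swapping the integrals and then putting `x = s (1 - t)`.
-/

open MeasureTheory ENNReal Finset

theorem Real.lintegral_comp_mul_left (g : ℝ → ℝ≥0∞) {a : ℝ} (ha : a ≠ 0) :
    ∫⁻ x, g (a * x) = ENNReal.ofReal |a⁻¹| * ∫⁻ y, g y := by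
  rw [← (measurableEmbedding_mulLeft₀ ha).lintegral_map, Real.map_volume_mul_left ha,
    lintegral_smul_measure, smul_eq_mul]

theorem lintegral_fin_succ_cons {α : Type*} [MeasureSpace α] [SigmaFinite (volume : Measure α)]
    {n : ℕ} {F : (Fin (n + 1) → α) → ℝ≥0∞} (hF : Measurable F) :
    ∫⁻ y, F y = ∫⁻ x, ∫⁻ z, F (Fin.cons x z) := by
  have e := (measurePreserving_piFinSuccAbove (fun _ : Fin (n + 1) => (volume : Measure α)) 0).symm
  rw [volume_pi, ← e.lintegral_comp_emb (MeasurableEquiv.measurableEmbedding _)]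
  refine (lintegral_prod _ (hF.comp (MeasurableEquiv.measurable _)).aemeasurable).trans ?_
  simp [MeasurableEquiv.piFinSuccAbove_symm_apply, Fin.insertNthEquiv, Fin.insertNth_zero',
    volume_pi]

theorem lintegral_abs_sub_rpow_mul_abs_rpow (a b : ℝ) {s : ℝ} (hs : s ≠ 0) :
    ∫⁻ x, ENNReal.ofReal (|s - x| ^ b * |x| ^ a)
      = ENNReal.ofReal (|s| ^ (a + b + 1)) * ∫⁻ t, ENNReal.ofReal (|t| ^ b * |1 - t| ^ a) := by
  have hs' : 0 < |s| := abs_pos.mpr hs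
  have scaled (t : ℝ) : |s - s * (1 - t)| ^ b * |s * (1 - t)| ^ a
      = |s| ^ (a + b) * (|t| ^ b * |1 - t| ^ a) := by
    rw [show s - s * (1 - t) = s * t by ring, abs_mul, abs_mul, Real.mul_rpow hs'.le (abs_nonneg _),
      Real.mul_rpow hs'.le (abs_nonneg _), Real.rpow_add hs']
    ring
  calc ∫⁻ x, ENNReal.ofReal (|s - x| ^ b * |x| ^ a)
      = ENNReal.ofReal |s| * ∫⁻ t, ENNReal.ofReal (|s - s * (1 - t)| ^ b * |s * (1 - t)| ^ a) := by
        rw [lintegral_sub_left_eq_self (fun t => ENNReal.ofReal (|s - s * t| ^ b * |s * t| ^ a)),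
          Real.lintegral_comp_mul_left (fun x => ENNReal.ofReal (|s - x| ^ b * |x| ^ a)) hs,
          ← mul_assoc, ← ENNReal.ofReal_mul (abs_nonneg _), abs_inv, mul_inv_cancel₀ hs'.ne',
          ENNReal.ofReal_one, one_mul]
    _ = ENNReal.ofReal (|s| ^ (a + b + 1)) * ∫⁻ t, ENNReal.ofReal (|t| ^ b * |1 - t| ^ a) := by
        simp_rw [scaled, ENNReal.ofReal_mul (Real.rpow_nonneg hs'.le _)]
        rw [lintegral_const_mul' _ _ ENNReal.ofReal_ne_top, ← mul_assoc,
          ← ENNReal.ofReal_mul hs'.le, Real.rpow_add_one hs'.ne', mul_comm |s|]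

theorem lintegral_lintegral_add_mul_abs_rpow {h : ℝ → ℝ≥0∞} (hh : Measurable h) (a b : ℝ) :
    ∫⁻ x, (∫⁻ y, h (x + y) * ENNReal.ofReal (|y| ^ b)) * ENNReal.ofReal (|x| ^ a)
      = (∫⁻ t, ENNReal.ofReal (|t| ^ b * |1 - t| ^ a))
        * ∫⁻ s, h s * ENNReal.ofReal (|s| ^ (a + b + 1)) := by
  set C := ∫⁻ t, ENNReal.ofReal (|t| ^ b * |1 - t| ^ a)
  have translate (x : ℝ) : (∫⁻ y, h (x + y) * ENNReal.ofReal (|y| ^ b)) * ENNReal.ofReal (|x| ^ a)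
      = ∫⁻ s, h s * ENNReal.ofReal (|s - x| ^ b * |x| ^ a) := by
    rw [← lintegral_mul_const' _ _ ENNReal.ofReal_ne_top,
      ← lintegral_add_left_eq_self (fun s => h s * ENNReal.ofReal (|s - x| ^ b * |x| ^ a)) x]
    simp_rw [add_sub_cancel_left, ENNReal.ofReal_mul (Real.rpow_nonneg (abs_nonneg _) _), mul_assoc]
  have inner : ∀ᵐ s : ℝ, ∫⁻ x, h s * ENNReal.ofReal (|s - x| ^ b * |x| ^ a)
      = C * (h s * ENNReal.ofReal (|s| ^ (a + b + 1))) := by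
    filter_upwards [Measure.ae_ne volume (0 : ℝ)] with s hs
    rw [lintegral_const_mul _ (by fun_prop), lintegral_abs_sub_rpow_mul_abs_rpow a b hs]
    ring
  simp_rw [translate]
  rw [lintegral_lintegral_swap (by fun_prop), lintegral_congr_ae inner,
    lintegral_const_mul _ (by fun_prop)]

/-- In the paper's 1-based notation, `tailExponent q β (i - 1) = q - i + B_i`; in particular
`tailExponent q β 0 = q - 1 + β₁ + ⋯ + β_q`. -/
def tailExponent (q : ℕ) (β : ℕ → ℝ) (i : ℕ) : ℝ :=
  (q : ℝ) - 1 - i + ∑ j ∈ Ico i q, β j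

noncomputable def gammaFactor (q : ℕ) (β : ℕ → ℝ) (i : ℕ) : ℝ≥0∞ :=
  ∫⁻ t : ℝ, ENNReal.ofReal (|t| ^ tailExponent q β i * |1 - t| ^ β (i - 1))

theorem tailExponent_succ_succ (q : ℕ) (β : ℕ → ℝ) (i : ℕ) :
    tailExponent (q + 1) β (i + 1) = tailExponent q (fun j => β (j + 1)) i := by
  simp only [tailExponent, sum_Ico_add' β i q 1]
  push_cast
  ring

theorem tailExponent_succ_zero (q : ℕ) (β : ℕ → ℝ) :
    tailExponent (q + 1) β 0 = β 0 + tailExponent q (fun j => β (j + 1)) 0 + 1 := by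
  simp only [tailExponent, sum_eq_sum_Ico_succ_bot q.succ_pos, sum_Ico_add' β 0 q 1]
  push_cast
  ring

theorem prod_gammaFactor_succ (q : ℕ) (β : ℕ → ℝ) :
    ∏ i ∈ Ico 1 (q + 2), gammaFactor (q + 2) β i
      = gammaFactor (q + 2) β 1
        * ∏ i ∈ Ico 1 (q + 1), gammaFactor (q + 1) (fun j => β (j + 1)) i := by
  rw [prod_eq_prod_Ico_succ_bot (by omega), ← prod_Ico_add']
  congr 1
  refine prod_congr rfl fun i hi => ?_
  obtain ⟨i, rfl⟩ := Nat.exists_eq_add_of_le' (mem_Ico.mp hi).1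
  simp only [gammaFactor, tailExponent_succ_succ, Nat.add_sub_cancel]

theorem lintegral_sum_mul_prod_abs_rpow (n : ℕ) (β : ℕ → ℝ) {f : ℝ → ℝ≥0∞} (hf : Measurable f) :
    ∫⁻ y : Fin (n + 1) → ℝ, f (∑ i, y i) * ∏ i : Fin (n + 1), ENNReal.ofReal (|y i| ^ β i)
      = (∏ i ∈ Ico 1 (n + 1), gammaFactor (n + 1) β i)
        * ∫⁻ s, f s * ENNReal.ofReal (|s| ^ tailExponent (n + 1) β 0) := by
  induction n generalizing β f with
  | zero =>
    have e := (volume_preserving_funUnique (Fin 1) ℝ).lintegral_comp_emb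
      (MeasurableEquiv.funUnique (Fin 1) ℝ).measurableEmbedding
      (fun s => f s * ENNReal.ofReal (|s| ^ β 0))
    simp only [MeasurableEquiv.funUnique_apply, Fin.default_eq_zero, Nat.reduceAdd, univ_unique,
      sum_singleton, prod_singleton, Fin.val_eq_zero, Ico_self, prod_empty, one_mul, tailExponent,
      Nat.cast_one, CharP.cast_eq_zero, sub_self, zero_add, Nat.Ico_succ_singleton] at e ⊢
    exact e
  | succ n ih =>
    set β' : ℕ → ℝ := fun j => β (j + 1)
    set Γ' := ∏ i ∈ Ico 1 (n + 1), gammaFactor (n + 1) β' i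
    set A := tailExponent (n + 1) β' 0
    have inner (x : ℝ) :
        ∫⁻ z : Fin (n + 1) → ℝ, f (x + ∑ i, z i) * ∏ i : Fin (n + 1), ENNReal.ofReal (|z i| ^ β' i)
          = Γ' * ∫⁻ s, f (x + s) * ENNReal.ofReal (|s| ^ A) :=
      ih β' (hf.comp (measurable_const_add x))
    calc _ = ∫⁻ x, (∫⁻ z : Fin (n + 1) → ℝ, f (x + ∑ i, z i)
              * ∏ i : Fin (n + 1), ENNReal.ofReal (|z i| ^ β' i)) * ENNReal.ofReal (|x| ^ β 0) := by
          rw [lintegral_fin_succ_cons (by fun_prop)]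
          refine lintegral_congr fun x => ?_
          rw [← lintegral_mul_const' _ _ ENNReal.ofReal_ne_top]
          refine lintegral_congr fun z => ?_
          rw [Fin.sum_cons, Fin.prod_univ_succ]
          simp only [Fin.cons_zero, Fin.cons_succ, Fin.val_zero, Fin.val_succ, β']
          ring
      _ = Γ' * ∫⁻ x, (∫⁻ s, f (x + s) * ENNReal.ofReal (|s| ^ A)) * ENNReal.ofReal (|x| ^ β 0) := by
          simp_rw [inner, mul_assoc]
          exact lintegral_const_mul _ (by fun_prop)
      _ = _ := by
          rw [lintegral_lintegral_add_mul_abs_rpow hf, prod_gammaFactor_succ,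
            tailExponent_succ_zero, gammaFactor, tailExponent_succ_succ, Nat.sub_self]
          ring

/-- Change-of-variables identity: for `q ≥ 1`, `β ∈ ℝ^q` and measurable
`f : ℝ → [0,∞]`,
`∫_{ℝ^q} f(y₁+⋯+y_q) ∏ |y_i|^{β_i} dy = Γ ⬝ ∫_ℝ f(s)|s|^{q-1+β₁+⋯+β_q} ds`,
where `Γ = ∏_{i=2}^q ∫ |t|^{q-i+B_i}|1-t|^{β_{i-1}} dt`, `B_i = β_i+⋯+β_q`
(0-based indexing: the product runs over `i ∈ {1,…,q-1}`), with the
convention `∞ ⬝ 0 = 0` (built into `ℝ≥0∞` multiplication). -/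
theorem integral_sum_kernel_factorization
    (q : ℕ) (hq : 1 ≤ q) (β : ℕ → ℝ) (f : ℝ → ℝ≥0∞) (hf : Measurable f) :
    ∫⁻ y : Fin q → ℝ, f (∑ i, y i) * ∏ i : Fin q, ENNReal.ofReal (|y i| ^ β i.1)
      = (∏ i ∈ Finset.Ico 1 q,
          ∫⁻ t : ℝ, ENNReal.ofReal
            (|t| ^ ((q : ℝ) - 1 - i + ∑ j ∈ Finset.Ico i q, β j) * |1 - t| ^ β (i - 1)))
        * ∫⁻ s : ℝ, f s * ENNReal.ofReal (|s| ^ ((q : ℝ) - 1 + ∑ i ∈ Finset.range q, β i)) := by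
  obtain ⟨n, rfl⟩ := Nat.exists_eq_add_of_le' hq
  have h := lintegral_sum_mul_prod_abs_rpow n β hf
  rwa [tailExponent, Nat.cast_zero, sub_zero, ← range_eq_Ico] at h
end

section
/- Let d ∈ (0, 1/2) and let q be a positive integer with q < 1/(1−2d), and let M₁ > 1. Define J_q(a) = ∫_{ℝ^q} (1 + |ζ₁+⋯+ζ_q − a|)^{−M₁} ∏_{i=1}^q |ζ_i|^{−2d} dζ. Then sup_{a ∈ ℝ} (1 + |a|)^{1 − q(1−2d)} J_q(a) < ∞; in particular J_q(0) < ∞ and J_q(a) = O(|a|^{−(1−q(1−2d))}) as |a| → ∞. -/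
/-!
Write `k_γ(x) = (1 + |x|)^(-γ)` and `w_β(t) = |t|^(-β)`. Integrating out one coordinate at a
time gives `J_{n+1}(a) = ∫ w_β(t) J_n(a - t) dt`, so everything rests on the convolution
estimate `∫ k_γ(x - t) w_β(t) dt ≲ k_{min(β, γ+β-1)}(x)` for `0 ≤ β < 1`, `γ > 0`, `γ ≠ 1` and
`γ + β > 1`. It follows by splitting the line at scale `R = (1 + |x|)/2`: where `|t| ≤ R` the
kernel is at most `R^(-γ)`; where `|x - t| ≤ R ≤ |t|` the weight is at most `R^(-β)`; and where
both distances exceed `R` the weight is comparable to `k_β(x - t)`, leaving the tail of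
`k_{γ+β}`. Starting from `k_{M₁}` with `M₁ > 1`, each of the `q` convolutions with `w_{2d}` costs
at most `1 - 2d` of decay, so `J_q ≲ k_{1 - q(1-2d)}`; `q(1 - 2d) < 1` keeps every exponent
positive.
-/

open MeasureTheory ENNReal Set

noncomputable section

def decayKernel (γ x : ℝ) : ℝ≥0∞ := ENNReal.ofReal ((1 + |x|) ^ (-γ))

def powerWeight (β t : ℝ) : ℝ≥0∞ := ENNReal.ofReal (|t| ^ (-β))

@[fun_prop]
lemma measurable_decayKernel (γ : ℝ) : Measurable (decayKernel γ) := by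
  unfold decayKernel; fun_prop

@[fun_prop]
lemma measurable_powerWeight (β : ℝ) : Measurable (powerWeight β) := by
  unfold powerWeight; fun_prop

lemma decayKernel_neg (γ x : ℝ) : decayKernel γ (-x) = decayKernel γ x := by
  rw [decayKernel, decayKernel, abs_neg]

lemma powerWeight_neg (β t : ℝ) : powerWeight β (-t) = powerWeight β t := by
  rw [powerWeight, powerWeight, abs_neg]

lemma decayKernel_anti {γ γ' : ℝ} (h : γ ≤ γ') (x : ℝ) :
    decayKernel γ' x ≤ decayKernel γ x :=
  ENNReal.ofReal_le_ofReal <|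
    Real.rpow_le_rpow_of_exponent_le (le_add_of_nonneg_right (abs_nonneg x)) (neg_le_neg h)

lemma decayKernel_le_powerWeight {γ x : ℝ} (hγ : 0 ≤ γ) (hx : x ≠ 0) :
    decayKernel γ x ≤ powerWeight γ x :=
  ENNReal.ofReal_le_ofReal <|
    Real.rpow_le_rpow_of_nonpos (abs_pos.2 hx) (le_add_of_nonneg_left zero_le_one)
      (neg_nonpos.2 hγ)

lemma ofReal_rpow_mul_ofReal_rpow {x : ℝ} (hx : 0 < x) (a b : ℝ) :
    ENNReal.ofReal (x ^ a) * ENNReal.ofReal (x ^ b) = ENNReal.ofReal (x ^ (a + b)) := by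
  rw [← ENNReal.ofReal_mul (Real.rpow_nonneg hx.le a), Real.rpow_add hx]

lemma decayKernel_mul_decayKernel (γ γ' x : ℝ) :
    decayKernel γ x * decayKernel γ' x = decayKernel (γ + γ') x := by
  rw [decayKernel, decayKernel, decayKernel, ofReal_rpow_mul_ofReal_rpow (by positivity), neg_add]

lemma ofReal_rpow_mul_decayKernel (γ x : ℝ) :
    ENNReal.ofReal ((1 + |x|) ^ γ) * decayKernel γ x = 1 := by
  rw [decayKernel, ofReal_rpow_mul_ofReal_rpow (by positivity), add_neg_cancel, Real.rpow_zero,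
    ENNReal.ofReal_one]

lemma ofReal_rpow_le_decayKernel {x R e ρ : ℝ} (hR : 2 * R = 1 + |x|) (he : e ≤ -ρ) :
    ENNReal.ofReal (R ^ e) ≤ ENNReal.ofReal (2 ^ (-e)) * decayKernel ρ x := by
  have hx : 1 ≤ 1 + |x| := le_add_of_nonneg_right (abs_nonneg x)
  rw [decayKernel, ← ENNReal.ofReal_mul (by positivity)]
  refine ENNReal.ofReal_le_ofReal ?_
  calc R ^ e = 2 ^ (-e) * (1 + |x|) ^ e := by
        rw [show R = (1 + |x|) / 2 by linarith, Real.div_rpow (by linarith) zero_le_two,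
          Real.rpow_neg zero_le_two, div_eq_inv_mul]
    _ ≤ 2 ^ (-e) * (1 + |x|) ^ (-ρ) := by gcongr

lemma setLIntegral_Ioc_powerWeight {β R : ℝ} (hβ : β < 1) (hR : 0 < R) :
    ∫⁻ t in Ioc 0 R, powerWeight β t = ENNReal.ofReal (R ^ (1 - β) / (1 - β)) := by
  have hint : IntegrableOn (fun t : ℝ => t ^ (-β)) (Ioc 0 R) := by
    rw [← intervalIntegrable_iff_integrableOn_Ioc_of_le hR.le]
    exact intervalIntegral.intervalIntegrable_rpow' (by linarith)
  rw [setLIntegral_congr_fun measurableSet_Ioc fun t ht => by rw [powerWeight, abs_of_pos ht.1],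
    ← ofReal_integral_eq_lintegral_ofReal hint
      ((ae_restrict_iff' measurableSet_Ioc).2 (ae_of_all _ fun t ht => Real.rpow_nonneg ht.1.le _)),
    ← intervalIntegral.integral_of_le hR.le, integral_rpow (Or.inl (by linarith)),
    Real.zero_rpow (by linarith), sub_zero, neg_add_eq_sub]

lemma setLIntegral_Ici_decayKernel {γ R : ℝ} (hγ : 1 < γ) (hR : 0 ≤ R) :
    ∫⁻ u in Ici R, decayKernel γ u = ENNReal.ofReal ((1 + R) ^ (1 - γ) / (γ - 1)) := by
  have hshift := (measurePreserving_add_right volume (1 : ℝ)).setLIntegral_comp_preimage_emb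
    (measurableEmbedding_addRight 1) (fun y => ENNReal.ofReal (y ^ (-γ))) (Ioi (1 + R))
  rw [preimage_add_const_Ioi, add_sub_cancel_left] at hshift
  rw [← Measure.restrict_congr_set Ioi_ae_eq_Ici,
    setLIntegral_congr_fun measurableSet_Ioi fun u (hu : R < u) => by
      rw [decayKernel, abs_of_nonneg (hR.trans hu.le), add_comm],
    hshift, ← ofReal_integral_eq_lintegral_ofReal
      (integrableOn_Ioi_rpow_of_lt (by linarith) (by linarith))
      ((ae_restrict_iff' measurableSet_Ioi).2 (ae_of_all _ fun u (hu : 1 + R < u) =>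
        Real.rpow_nonneg (by linarith) _)),
    integral_Ioi_rpow_of_lt (by linarith) (by linarith)]
  congr 1
  rw [neg_add_eq_sub, neg_div, ← div_neg, neg_sub]

lemma setLIntegral_abs_preimage_le {f : ℝ → ℝ≥0∞} (hf : ∀ x, f (-x) = f x)
    (s : Set ℝ) :
    ∫⁻ t in abs ⁻¹' s, f t ≤ 2 * ∫⁻ t in s ∩ Ici 0, f t := by
  have hcover : abs ⁻¹' s ⊆ Neg.neg ⁻¹' (s ∩ Ici 0) ∪ (s ∩ Ici 0) := by
    intro t ht
    rcases le_or_gt 0 t with h | h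
    · exact Or.inr ⟨by rwa [mem_preimage, abs_of_nonneg h] at ht, h⟩
    · exact Or.inl ⟨by rwa [mem_preimage, abs_of_neg h] at ht, by simp [h.le]⟩
  have hneg : ∫⁻ t in Neg.neg ⁻¹' (s ∩ Ici 0), f t = ∫⁻ t in s ∩ Ici 0, f t := by
    simpa [hf] using (Measure.measurePreserving_neg volume).setLIntegral_comp_preimage_emb
      (MeasurableEquiv.neg ℝ).measurableEmbedding f (s ∩ Ici 0)
  calc ∫⁻ t in abs ⁻¹' s, f t
      ≤ ∫⁻ t in Neg.neg ⁻¹' (s ∩ Ici 0) ∪ (s ∩ Ici 0), f t :=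
        lintegral_mono_set hcover
    _ ≤ (∫⁻ t in Neg.neg ⁻¹' (s ∩ Ici 0), f t) + ∫⁻ t in s ∩ Ici 0, f t :=
        lintegral_union_le _ _ _
    _ = 2 * ∫⁻ t in s ∩ Ici 0, f t := by rw [hneg, two_mul]

lemma setLIntegral_abs_le_powerWeight_le {β R : ℝ} (hβ : β < 1) (hR : 0 < R) :
    ∫⁻ t in {t | |t| ≤ R}, powerWeight β t
      ≤ ENNReal.ofReal (2 / (1 - β) * R ^ (1 - β)) := by
  calc ∫⁻ t in abs ⁻¹' Iic R, powerWeight β t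
      ≤ 2 * ∫⁻ t in Iic R ∩ Ici 0, powerWeight β t :=
        setLIntegral_abs_preimage_le (powerWeight_neg β) _
    _ = ENNReal.ofReal (2 / (1 - β) * R ^ (1 - β)) := by
        rw [Iic_inter_Ici, Measure.restrict_congr_set Ioc_ae_eq_Icc.symm,
          setLIntegral_Ioc_powerWeight hβ hR, ← ENNReal.ofReal_ofNat 2,
          ← ENNReal.ofReal_mul zero_le_two]
        ring_nf

lemma setLIntegral_le_abs_decayKernel_le {γ R : ℝ} (hγ : 1 < γ) (hR : 0 ≤ R) :
    ∫⁻ u in {u | R ≤ |u|}, decayKernel γ u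
      ≤ ENNReal.ofReal (2 / (γ - 1) * (1 + R) ^ (1 - γ)) := by
  calc ∫⁻ u in abs ⁻¹' Ici R, decayKernel γ u
      ≤ 2 * ∫⁻ u in Ici R ∩ Ici 0, decayKernel γ u :=
        setLIntegral_abs_preimage_le (decayKernel_neg γ) _
    _ = ENNReal.ofReal (2 / (γ - 1) * (1 + R) ^ (1 - γ)) := by
        rw [Ici_inter_Ici, max_eq_left hR, setLIntegral_Ici_decayKernel hγ hR,
          ← ENNReal.ofReal_ofNat 2, ← ENNReal.ofReal_mul zero_le_two]
        ring_nf

-- At `γ = 1` the left side grows like `log R`; this is why `γ = 1` is excluded throughout.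
lemma exists_setLIntegral_abs_le_decayKernel_le {γ : ℝ} (hγ : 0 < γ) (hγ1 : γ ≠ 1) :
    ∃ c : ℝ≥0∞, c ≠ ⊤ ∧ ∀ R : ℝ, 0 < R →
      ∫⁻ u in {u | |u| ≤ R}, decayKernel γ u
        ≤ c * ENNReal.ofReal (R ^ max 0 (1 - γ)) := by
  rcases hγ1.lt_or_gt with hlt | hgt
  · refine ⟨ENNReal.ofReal (2 / (1 - γ)), ofReal_ne_top, fun R hR => ?_⟩
    calc ∫⁻ u in {u | |u| ≤ R}, decayKernel γ u
        ≤ ∫⁻ u in {u | |u| ≤ R}, powerWeight γ u :=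
          lintegral_mono_ae <| ae_restrict_of_ae <|
            (Measure.ae_ne volume 0).mono fun u hu => decayKernel_le_powerWeight hγ.le hu
      _ ≤ ENNReal.ofReal (2 / (1 - γ) * R ^ (1 - γ)) :=
          setLIntegral_abs_le_powerWeight_le hlt hR
      _ = _ := by rw [max_eq_right (by linarith), ENNReal.ofReal_mul (by bound)]
  · refine ⟨ENNReal.ofReal (2 / (γ - 1)), ofReal_ne_top, fun R hR => ?_⟩
    calc ∫⁻ u in {u | |u| ≤ R}, decayKernel γ u
        ≤ ∫⁻ u in {u | 0 ≤ |u|}, decayKernel γ u :=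
          lintegral_mono_set fun u _ => abs_nonneg u
      _ ≤ ENNReal.ofReal (2 / (γ - 1) * (1 + 0) ^ (1 - γ)) :=
          setLIntegral_le_abs_decayKernel_le hgt le_rfl
      _ = _ := by rw [max_eq_left (by linarith)]; simp

lemma setLIntegral_comp_sub_left_le (f : ℝ → ℝ≥0∞) {x : ℝ} {S s : Set ℝ}
    (h : ∀ t ∈ S, x - t ∈ s) : ∫⁻ t in S, f (x - t) ≤ ∫⁻ u in s, f u :=
  calc ∫⁻ t in S, f (x - t) ≤ ∫⁻ t in (x - ·) ⁻¹' s, f (x - t) := lintegral_mono_set h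
    _ = ∫⁻ u in s, f u :=
        (Measure.measurePreserving_sub_left volume x).setLIntegral_comp_preimage_emb
          (MeasurableEquiv.subLeft x).measurableEmbedding f s

lemma setLIntegral_decayKernel_sub_mul_powerWeight_of_abs_le {β γ x R : ℝ} (hβ : β < 1)
    (hγ : 0 ≤ γ) (hR : 2 * R = 1 + |x|) :
    ∫⁻ t in {t | |t| ≤ R}, decayKernel γ (x - t) * powerWeight β t
      ≤ ENNReal.ofReal (2 / (1 - β)) * ENNReal.ofReal (R ^ (1 - γ - β)) := by
  have hR0 : 0 < R := by linarith [abs_nonneg x]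
  have hkernel : ∀ t ∈ {t : ℝ | |t| ≤ R},
      decayKernel γ (x - t) ≤ ENNReal.ofReal (R ^ (-γ)) := by
    intro t ht
    have : R ≤ 1 + |x - t| := by linarith [abs_sub_abs_le_abs_sub x t, ht.out]
    exact ENNReal.ofReal_le_ofReal (Real.rpow_le_rpow_of_nonpos hR0 this (by linarith))
  calc ∫⁻ t in {t | |t| ≤ R}, decayKernel γ (x - t) * powerWeight β t
      ≤ ∫⁻ t in {t | |t| ≤ R}, ENNReal.ofReal (R ^ (-γ)) * powerWeight β t :=
        setLIntegral_mono' (measurableSet_le (by fun_prop) (by fun_prop)) fun t ht => by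
          gcongr; exact hkernel t ht
    _ = ENNReal.ofReal (R ^ (-γ)) * ∫⁻ t in {t | |t| ≤ R}, powerWeight β t :=
        lintegral_const_mul _ (by fun_prop)
    _ ≤ ENNReal.ofReal (R ^ (-γ)) * ENNReal.ofReal (2 / (1 - β) * R ^ (1 - β)) := by
        gcongr; exact setLIntegral_abs_le_powerWeight_le hβ hR0
    _ = ENNReal.ofReal (2 / (1 - β)) * ENNReal.ofReal (R ^ (1 - γ - β)) := by
        rw [ENNReal.ofReal_mul (by bound), mul_left_comm, ofReal_rpow_mul_ofReal_rpow hR0,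
          show -γ + (1 - β) = 1 - γ - β by ring]

lemma setLIntegral_decayKernel_sub_mul_powerWeight_of_abs_sub_le {β γ x R : ℝ} (hβ : 0 ≤ β)
    (hR : 0 < R) :
    ∫⁻ t in {t | |x - t| ≤ R} ∩ {t | R ≤ |t|}, decayKernel γ (x - t) * powerWeight β t
      ≤ ENNReal.ofReal (R ^ (-β)) * ∫⁻ u in {u | |u| ≤ R}, decayKernel γ u := by
  have hmeas : MeasurableSet ({t | |x - t| ≤ R} ∩ {t : ℝ | R ≤ |t|}) :=
    (measurableSet_le (by fun_prop) (by fun_prop)).inter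
      (measurableSet_le (by fun_prop) (by fun_prop))
  calc ∫⁻ t in {t | |x - t| ≤ R} ∩ {t | R ≤ |t|},
        decayKernel γ (x - t) * powerWeight β t
      ≤ ∫⁻ t in {t | |x - t| ≤ R} ∩ {t | R ≤ |t|},
          ENNReal.ofReal (R ^ (-β)) * decayKernel γ (x - t) :=
        setLIntegral_mono' hmeas fun t ht => by
          rw [mul_comm]
          gcongr
          exact ENNReal.ofReal_le_ofReal (Real.rpow_le_rpow_of_nonpos hR ht.2 (by linarith))
    _ = ENNReal.ofReal (R ^ (-β)) *
          ∫⁻ t in {t | |x - t| ≤ R} ∩ {t | R ≤ |t|}, decayKernel γ (x - t) :=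
        lintegral_const_mul _ (by fun_prop)
    _ ≤ ENNReal.ofReal (R ^ (-β)) * ∫⁻ u in {u | |u| ≤ R}, decayKernel γ u := by
        gcongr _ * ?_
        exact setLIntegral_comp_sub_left_le _ fun t ht => ht.1

lemma setLIntegral_decayKernel_sub_mul_powerWeight_of_le_abs {β γ x R : ℝ} (hβ : 0 ≤ β)
    (hγβ : 1 < γ + β) (hR : 2 * R = 1 + |x|) :
    ∫⁻ t in {t | R ≤ |t|} ∩ {t | R ≤ |x - t|}, decayKernel γ (x - t) * powerWeight β t
      ≤ ENNReal.ofReal (3 ^ β * (2 / (γ + β - 1))) * ENNReal.ofReal (R ^ (1 - γ - β)) := by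
  have hR0 : 0 < R := by linarith [abs_nonneg x]
  have hmeas : MeasurableSet ({t : ℝ | R ≤ |t|} ∩ {t | R ≤ |x - t|}) :=
    (measurableSet_le (by fun_prop) (by fun_prop)).inter
      (measurableSet_le (by fun_prop) (by fun_prop))
  -- on this region `1 + |x - t| ≤ 2 R + |t| ≤ 3 |t|`
  have hweight : ∀ t ∈ {t : ℝ | R ≤ |t|} ∩ {t | R ≤ |x - t|},
      powerWeight β t ≤ ENNReal.ofReal (3 ^ β) * decayKernel β (x - t) := by
    intro t ht
    have hle : 1 + |x - t| ≤ 3 * |t| := by linarith [abs_sub x t, ht.1.out]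
    rw [powerWeight, decayKernel, ← ENNReal.ofReal_mul (by positivity)]
    refine ENNReal.ofReal_le_ofReal ?_
    calc |t| ^ (-β) = 3 ^ β * (3 * |t|) ^ (-β) := by
          rw [Real.mul_rpow zero_le_three (abs_nonneg t), ← mul_assoc,
            ← Real.rpow_add zero_lt_three, add_neg_cancel, Real.rpow_zero, one_mul]
      _ ≤ 3 ^ β * (1 + |x - t|) ^ (-β) := by
          gcongr 3 ^ β * ?_
          exact Real.rpow_le_rpow_of_nonpos (by positivity) hle (neg_nonpos.2 hβ)
  calc ∫⁻ t in {t | R ≤ |t|} ∩ {t | R ≤ |x - t|},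
        decayKernel γ (x - t) * powerWeight β t
      ≤ ∫⁻ t in {t | R ≤ |t|} ∩ {t | R ≤ |x - t|},
          ENNReal.ofReal (3 ^ β) * decayKernel (γ + β) (x - t) :=
        setLIntegral_mono' hmeas fun t ht => by
          rw [← decayKernel_mul_decayKernel, mul_left_comm]
          gcongr
          exact hweight t ht
    _ = ENNReal.ofReal (3 ^ β) *
          ∫⁻ t in {t | R ≤ |t|} ∩ {t | R ≤ |x - t|}, decayKernel (γ + β) (x - t) :=
        lintegral_const_mul _ (by fun_prop)
    _ ≤ ENNReal.ofReal (3 ^ β) * ∫⁻ u in {u | R ≤ |u|}, decayKernel (γ + β) u := by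
        gcongr _ * ?_
        exact setLIntegral_comp_sub_left_le _ fun t ht => ht.2
    _ ≤ ENNReal.ofReal (3 ^ β) *
          ENNReal.ofReal (2 / (γ + β - 1) * (1 + R) ^ (1 - (γ + β))) := by
        gcongr
        exact setLIntegral_le_abs_decayKernel_le hγβ hR0.le
    _ ≤ ENNReal.ofReal (3 ^ β) * ENNReal.ofReal (2 / (γ + β - 1) * R ^ (1 - γ - β)) := by
        gcongr
        rw [sub_add_eq_sub_sub]
        exact Real.rpow_le_rpow_of_nonpos hR0 (by linarith) (by linarith)
    _ = _ := by
        rw [ENNReal.ofReal_mul (by bound), ← mul_assoc, ← ENNReal.ofReal_mul (by positivity)]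

theorem exists_lintegral_decayKernel_sub_mul_powerWeight_le {β γ : ℝ} (hβ₀ : 0 ≤ β)
    (hβ₁ : β < 1) (hγ : 0 < γ) (hγ₁ : γ ≠ 1) (hγβ : 1 < γ + β) :
    ∃ C : ℝ≥0∞, C ≠ ⊤ ∧ ∀ x : ℝ,
      ∫⁻ t, decayKernel γ (x - t) * powerWeight β t
        ≤ C * decayKernel (min β (γ + β - 1)) x := by
  obtain ⟨c, hc, hball⟩ := exists_setLIntegral_abs_le_decayKernel_le hγ hγ₁
  have hfar : 1 - γ - β ≤ -min β (γ + β - 1) := by linarith [min_le_right β (γ + β - 1)]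
  have hnear : max 0 (1 - γ) - β ≤ -min β (γ + β - 1) := by
    rcases max_cases 0 (1 - γ) with ⟨h, -⟩ | ⟨h, -⟩ <;> rw [h] <;>
      linarith [min_le_left β (γ + β - 1), min_le_right β (γ + β - 1)]
  set ρ := min β (γ + β - 1)
  set m := max 0 (1 - γ)
  refine ⟨ENNReal.ofReal (2 / (1 - β)) * ENNReal.ofReal (2 ^ (-(1 - γ - β)))
      + c * ENNReal.ofReal (2 ^ (-(m - β)))
      + ENNReal.ofReal (3 ^ β * (2 / (γ + β - 1))) * ENNReal.ofReal (2 ^ (-(1 - γ - β))),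
    by finiteness, fun x => ?_⟩
  set R := (1 + |x|) / 2
  have hR : 2 * R = 1 + |x| := by ring
  have hR0 : 0 < R := by positivity
  have hcover : (univ : Set ℝ) ⊆ {t | |t| ≤ R} ∪ ({t | |x - t| ≤ R} ∩ {t | R ≤ |t|}
      ∪ {t | R ≤ |t|} ∩ {t | R ≤ |x - t|}) := by
    intro t _
    rcases le_total |t| R with h | h
    · exact Or.inl h
    · rcases le_total |x - t| R with h' | h'
      · exact Or.inr (Or.inl ⟨h', h⟩)
      · exact Or.inr (Or.inr ⟨h, h'⟩)
  have hB : ∫⁻ t in {t | |x - t| ≤ R} ∩ {t | R ≤ |t|},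
      decayKernel γ (x - t) * powerWeight β t ≤ c * ENNReal.ofReal (R ^ (m - β)) :=
    calc _ ≤ ENNReal.ofReal (R ^ (-β)) * ∫⁻ u in {u | |u| ≤ R}, decayKernel γ u :=
          setLIntegral_decayKernel_sub_mul_powerWeight_of_abs_sub_le hβ₀ hR0
      _ ≤ ENNReal.ofReal (R ^ (-β)) * (c * ENNReal.ofReal (R ^ m)) := by
          gcongr; exact hball R hR0
      _ = c * ENNReal.ofReal (R ^ (m - β)) := by
          rw [mul_left_comm, ofReal_rpow_mul_ofReal_rpow hR0, neg_add_eq_sub]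
  calc ∫⁻ t, decayKernel γ (x - t) * powerWeight β t
      ≤ ∫⁻ t in {t | |t| ≤ R} ∪ ({t | |x - t| ≤ R} ∩ {t | R ≤ |t|}
          ∪ {t | R ≤ |t|} ∩ {t | R ≤ |x - t|}),
            decayKernel γ (x - t) * powerWeight β t := by
        rw [← setLIntegral_univ]; exact lintegral_mono_set hcover
    _ ≤ ENNReal.ofReal (2 / (1 - β)) * ENNReal.ofReal (R ^ (1 - γ - β))
        + (c * ENNReal.ofReal (R ^ (m - β))
          + ENNReal.ofReal (3 ^ β * (2 / (γ + β - 1)))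
            * ENNReal.ofReal (R ^ (1 - γ - β))) := by
        refine (lintegral_union_le _ _ _).trans (add_le_add ?_ ((lintegral_union_le _ _ _).trans
          (add_le_add hB ?_)))
        · exact setLIntegral_decayKernel_sub_mul_powerWeight_of_abs_le hβ₁ hγ.le hR
        · exact setLIntegral_decayKernel_sub_mul_powerWeight_of_le_abs hβ₀ hγβ hR
    _ ≤ ENNReal.ofReal (2 / (1 - β)) * (ENNReal.ofReal (2 ^ (-(1 - γ - β))) * decayKernel ρ x)
        + (c * (ENNReal.ofReal (2 ^ (-(m - β))) * decayKernel ρ x)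
          + ENNReal.ofReal (3 ^ β * (2 / (γ + β - 1)))
            * (ENNReal.ofReal (2 ^ (-(1 - γ - β))) * decayKernel ρ x)) := by
        gcongr <;> exact ofReal_rpow_le_decayKernel hR ‹_›
    _ = _ := by ring

def weightedSumIntegral (k w : ℝ → ℝ≥0∞) (n : ℕ) (a : ℝ) : ℝ≥0∞ :=
  ∫⁻ ζ : Fin n → ℝ, k (∑ i, ζ i - a) * ∏ i, w (ζ i)

lemma weightedSumIntegral_zero (k w : ℝ → ℝ≥0∞) (a : ℝ) :
    weightedSumIntegral k w 0 a = k (-a) := by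
  simp [weightedSumIntegral, volume_pi]

lemma weightedSumIntegral_succ {k w : ℝ → ℝ≥0∞} (hk : Measurable k) (hw : Measurable w)
    (n : ℕ) (a : ℝ) :
    weightedSumIntegral k w (n + 1) a = ∫⁻ t, w t * weightedSumIntegral k w n (a - t) := by
  have hsplit :=
    (measurePreserving_piFinSuccAbove (fun _ : Fin (n + 1) => (volume : Measure ℝ)) 0).symm
  rw [weightedSumIntegral, volume_pi, ← hsplit.lintegral_comp (by fun_prop),
    lintegral_prod _ (by fun_prop)]
  refine lintegral_congr fun t => ?_
  rw [weightedSumIntegral, volume_pi, ← lintegral_const_mul _ (by fun_prop)]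
  refine lintegral_congr fun ζ => ?_
  simp only [MeasurableEquiv.piFinSuccAbove_symm_apply, Fin.insertNthEquiv_zero,
    Fin.consEquiv_apply, Fin.sum_univ_succ, Fin.cons_zero, Fin.cons_succ, Fin.prod_univ_succ]
  rw [show t + ∑ i, ζ i - a = ∑ i, ζ i - (a - t) by ring, mul_left_comm]

lemma weightedSumIntegral_decayKernel_powerWeight (γ β : ℝ) (n : ℕ) (a : ℝ) :
    weightedSumIntegral (decayKernel γ) (powerWeight β) n a =
      ∫⁻ ζ : Fin n → ℝ,
        ENNReal.ofReal ((1 + |∑ i, ζ i - a|) ^ (-γ) * ∏ i, |ζ i| ^ (-β)) := by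
  refine lintegral_congr fun ζ => ?_
  rw [ENNReal.ofReal_mul (by positivity),
    ENNReal.ofReal_prod_of_nonneg fun i _ => by positivity, decayKernel]
  rfl

theorem exists_weightedSumIntegral_le_mul_decayKernel {M β : ℝ} (hM : 1 < M) (hβ₀ : 0 ≤ β)
    (hβ₁ : β < 1) {n : ℕ} (hn : n * (1 - β) < 1) :
    ∃ γ C, 1 - n * (1 - β) ≤ γ ∧ γ ≠ 1 ∧ C ≠ ⊤ ∧ ∀ a,
      weightedSumIntegral (decayKernel M) (powerWeight β) n a ≤ C * decayKernel γ a := by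
  induction n with
  | zero =>
    refine ⟨M, 1, by simpa using hM.le, hM.ne', one_ne_top, fun a => ?_⟩
    rw [weightedSumIntegral_zero, decayKernel_neg, one_mul]
  | succ n ih =>
    push_cast at hn
    obtain ⟨γ, C, hγ, hγ₁, hC, hbound⟩ := ih (by nlinarith)
    obtain ⟨C', hC', hconv⟩ := exists_lintegral_decayKernel_sub_mul_powerWeight_le hβ₀ hβ₁
      (by nlinarith) hγ₁ (by linarith)
    refine ⟨min β (γ + β - 1), C * C',
      le_min (by push_cast; nlinarith) (by push_cast; linarith),
      ((min_le_left _ _).trans_lt hβ₁).ne, mul_ne_top hC hC', fun a => ?_⟩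
    calc weightedSumIntegral (decayKernel M) (powerWeight β) (n + 1) a
        = ∫⁻ t, powerWeight β t *
            weightedSumIntegral (decayKernel M) (powerWeight β) n (a - t) :=
          weightedSumIntegral_succ (by fun_prop) (by fun_prop) n a
      _ ≤ ∫⁻ t, powerWeight β t * (C * decayKernel γ (a - t)) := by
          gcongr with t
          exact hbound _
      _ = C * ∫⁻ t, decayKernel γ (a - t) * powerWeight β t := by
          rw [← lintegral_const_mul' _ _ hC]
          congr 1 with t
          ring
      _ ≤ C * (C' * decayKernel (min β (γ + β - 1)) a) := by gcongr; exact hconv a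
      _ = C * C' * decayKernel (min β (γ + β - 1)) a := (mul_assoc _ _ _).symm

end

theorem sup_weighted_J_lt_top_general
    (d : ℝ) (hd : 0 < d) (hd' : d < 1/2)
    (q : ℕ) (hqd : (q : ℝ) < 1 / (1 - 2*d))
    (M₁ : ℝ) (hM : 1 < M₁) :
    (⨆ a : ℝ, ENNReal.ofReal ((1 + |a|) ^ (1 - (q : ℝ) * (1 - 2*d))) *
      ∫⁻ ζ : Fin q → ℝ,
        ENNReal.ofReal ((1 + |(∑ i, ζ i) - a|) ^ (-M₁) * ∏ i : Fin q, |ζ i| ^ (-(2*d)))) < ⊤ := by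
  have h2d : 0 < 1 - 2 * d := by linarith
  obtain ⟨γ, C, hγ, -, hC, hbound⟩ := exists_weightedSumIntegral_le_mul_decayKernel hM
    (by linarith : 0 ≤ 2 * d) (by linarith) ((lt_div_iff₀ h2d).1 hqd)
  refine (iSup_le fun a => ?_).trans_lt hC.lt_top
  rw [← weightedSumIntegral_decayKernel_powerWeight]
  calc ENNReal.ofReal ((1 + |a|) ^ (1 - q * (1 - 2 * d))) *
        weightedSumIntegral (decayKernel M₁) (powerWeight (2 * d)) q a
      ≤ ENNReal.ofReal ((1 + |a|) ^ (1 - q * (1 - 2 * d))) *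
        (C * decayKernel (1 - q * (1 - 2 * d)) a) := by
        gcongr
        exact (hbound a).trans (by gcongr; exact decayKernel_anti hγ a)
    _ = C := by rw [mul_left_comm, ofReal_rpow_mul_decayKernel, mul_one]

/-- Uniform bound: for `d ∈ (0,1/2)`, `q < 1/(1-2d)` a positive integer and `M₁ > 1`,
`sup_{a ∈ ℝ} (1+|a|)^{1-q(1-2d)} ∫_{ℝ^q} (1+|Σζ-a|)^{-M₁} ∏ |ζ_i|^{-2d} dζ < ∞`. -/
theorem sup_weighted_J_lt_top
    (d : ℝ) (hd : 0 < d) (hd' : d < 1/2)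
    (q : ℕ) (hq : 1 ≤ q) (hqd : (q : ℝ) < 1 / (1 - 2*d))
    (M₁ : ℝ) (hM : 1 < M₁) :
    (⨆ a : ℝ, ENNReal.ofReal ((1 + |a|) ^ (1 - (q : ℝ) * (1 - 2*d))) *
      ∫⁻ ζ : Fin q → ℝ,
        ENNReal.ofReal ((1 + |(∑ i, ζ i) - a|) ^ (-M₁) * ∏ i : Fin q, |ζ i| ^ (-(2*d)))) < ⊤ :=
  sup_weighted_J_lt_top_general d hd hd' q hqd M₁ hM
end

section
/- Let d ∈ (0,1/2) and let q be a positive integer with q(1−2d) < 1, α > 1/2, K ≥ 0. Then ∫_{ℝ^q} (1/2 + |λ₁+⋯+λ_q|)^{−2(α+K)} ∏_{i=1}^q |λ_i|^{−2d} dλ < ∞. -/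
/-!
Put `r = -2d ∈ (-1, 0)`. Under the density `∏ |λᵢ|^r`, the sum `λ₁ + ⋯ + λ_q` has a law dominated
by a constant times `|s|^(q(1+r)-1) ds`: adding a coordinate convolves with `|x|^r`, and by
homogeneity `∫ |u - x|^p |x|^r dx = |u|^(p+r+1) ∫ |1 - v|^p |v|^r dv`, where the last (Beta-type)
integral is finite as soon as `p, r > -1 > p + r`. It then remains to integrate
`(1/2 + |s|)^(-2(α+K)) |s|^(q(1-2d)-1)` over `ℝ`, which converges near `0` because `q(1-2d) > 0` and
at infinity because `2(α+K) > 1 > q(1-2d)`.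
-/

open MeasureTheory ENNReal Filter Asymptotics

theorem integrable_add_abs_rpow_mul_abs_rpow {c m r : ℝ} (hc : 0 < c) (hr : -1 < r)
    (hmr : m + r < -1) : Integrable fun s : ℝ => (c + |s|) ^ m * |s| ^ r := by
  have hm : m ≤ 0 := by linarith
  have hmeas : AEStronglyMeasurable (fun s : ℝ => (c + |s|) ^ m * |s| ^ r) volume := by
    fun_prop
  have hloc : LocallyIntegrable (fun s : ℝ => (c + |s|) ^ m * |s| ^ r) volume := by
    refine locallyIntegrable_of_norm_le_rpow (C := c ^ m) (α := -r) (by simp)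
      (by simp; linarith) ?_ hmeas
    refine ae_of_all _ fun s => ?_
    rw [neg_neg, Real.norm_eq_abs, Real.norm_eq_abs, abs_of_nonneg (by positivity)]
    exact mul_le_mul_of_nonneg_right (Real.rpow_le_rpow_of_nonpos hc (by simp) hm) (by positivity)
  refine hloc.integrable_of_isBigO_atTop_of_norm_isNegInvariant (ae_of_all _ fun s => by simp)
    (g := fun s : ℝ => s ^ (m + r)) ?_ (integrableAtFilter_rpow_atTop_iff.2 hmr)
  refine IsBigO.of_bound 1 ?_
  filter_upwards [eventually_gt_atTop 0] with s hs
  simp only [one_mul, Real.norm_eq_abs, abs_of_pos hs]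
  rw [abs_of_nonneg (by positivity), abs_of_nonneg (by positivity), Real.rpow_add hs]
  exact mul_le_mul_of_nonneg_right (Real.rpow_le_rpow_of_nonpos hs (by linarith) hm) (by positivity)

theorem abs_rpow_mul_abs_rpow_le_of_add_eq_one {x y p r : ℝ} (hxy : x + y = 1) (hp : p ≤ 0)
    (h : |x| ≤ |y|) : |y| ^ p * |x| ^ r ≤ 2 ^ (-p) * ((1 / 2 + |x|) ^ p * |x| ^ r) := by
  have hy : 1 / 2 + |x| ≤ 2 * |y| := by
    have := abs_add_le x y
    rw [hxy, abs_one] at this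
    linarith
  have : |y| ^ p ≤ 2 ^ (-p) * (1 / 2 + |x|) ^ p := by
    rw [Real.rpow_neg zero_le_two, ← div_eq_inv_mul, le_div_iff₀' (by positivity),
      ← Real.mul_rpow zero_le_two (abs_nonneg y)]
    exact Real.rpow_le_rpow_of_nonpos (by positivity) hy hp
  rw [← mul_assoc]
  gcongr

theorem integrable_abs_one_sub_rpow_mul_abs_rpow {p r : ℝ} (hp : -1 < p) (hr : -1 < r)
    (hpr : p + r < -1) : Integrable fun v : ℝ => |1 - v| ^ p * |v| ^ r := by
  -- Away from `1` the factor `|1 - v| ^ p` behaves like `(1/2 + |v|) ^ p`, and symmetrically.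
  have hnear_zero := integrable_add_abs_rpow_mul_abs_rpow one_half_pos hr hpr
  have hnear_one := (integrable_add_abs_rpow_mul_abs_rpow one_half_pos hp
    (by linarith : r + p < -1)).comp_sub_left 1
  refine ((hnear_zero.const_mul (2 ^ (-p))).add (hnear_one.const_mul (2 ^ (-r)))).mono'
    (by fun_prop) (ae_of_all _ fun v => ?_)
  rw [Real.norm_eq_abs, abs_of_nonneg (by positivity)]
  have h0 : 0 ≤ 2 ^ (-p) * ((1 / 2 + |v|) ^ p * |v| ^ r) := by positivity
  have h1 : 0 ≤ 2 ^ (-r) * ((1 / 2 + |1 - v|) ^ r * |1 - v| ^ p) := by positivity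
  simp only [Pi.add_apply]
  rcases le_total |v| |1 - v| with h | h
  · have := abs_rpow_mul_abs_rpow_le_of_add_eq_one (p := p) (r := r) (add_sub_cancel v 1)
      (by linarith) h
    linarith
  · have := abs_rpow_mul_abs_rpow_le_of_add_eq_one (p := r) (r := p) (sub_add_cancel 1 v)
      (by linarith) h
    linarith [mul_comm (|1 - v| ^ p) (|v| ^ r)]

theorem lintegral_eq_abs_mul_lintegral_comp_mul_left (f : ℝ → ℝ≥0∞) {u : ℝ} (hu : u ≠ 0) :
    ∫⁻ x, f x = ENNReal.ofReal |u| * ∫⁻ v, f (u * v) := by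
  conv_lhs => rw [← Real.smul_map_volume_mul_left hu]
  rw [lintegral_smul_measure, smul_eq_mul]
  exact congrArg _ (lintegral_map_equiv f (MeasurableEquiv.mulLeft₀ u hu))

theorem lintegral_abs_sub_rpow_mul_abs_rpow_s17 (p r : ℝ) {u : ℝ} (hu : u ≠ 0) :
    ∫⁻ x, ENNReal.ofReal (|u - x| ^ p * |x| ^ r) =
      ENNReal.ofReal (|u| ^ (p + r + 1)) * ∫⁻ v, ENNReal.ofReal (|1 - v| ^ p * |v| ^ r) := by
  have hu' : 0 < |u| := abs_pos.2 hu
  have hhom : ∀ v, |u - u * v| ^ p * |u * v| ^ r = |u| ^ (p + r) * (|1 - v| ^ p * |v| ^ r) := by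
    intro v
    rw [← mul_one_sub, abs_mul, abs_mul, Real.mul_rpow hu'.le (abs_nonneg _),
      Real.mul_rpow hu'.le (abs_nonneg _), Real.rpow_add hu']
    ring
  rw [lintegral_eq_abs_mul_lintegral_comp_mul_left _ hu]
  simp_rw [hhom, ENNReal.ofReal_mul (by positivity : 0 ≤ |u| ^ (p + r))]
  rw [lintegral_const_mul' _ _ ENNReal.ofReal_ne_top, ← mul_assoc, ← ENNReal.ofReal_mul hu'.le,
    Real.rpow_add_one hu'.ne', mul_comm |u|]

theorem lintegral_abs_rpow_mul_lintegral_comp_add {F : ℝ → ℝ≥0∞} (hF : Measurable F) (p r : ℝ) :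
    ∫⁻ x, ENNReal.ofReal (|x| ^ r) * ∫⁻ s, F (x + s) * ENNReal.ofReal (|s| ^ p) =
      (∫⁻ v, ENNReal.ofReal (|1 - v| ^ p * |v| ^ r)) *
        ∫⁻ u, F u * ENNReal.ofReal (|u| ^ (p + r + 1)) := by
  have htranslate : ∀ x, ∫⁻ s, F (x + s) * ENNReal.ofReal (|s| ^ p) =
      ∫⁻ u, F u * ENNReal.ofReal (|u - x| ^ p) := fun x => by
    simpa using lintegral_add_left_eq_self (fun u => F u * ENNReal.ofReal (|u - x| ^ p)) x
  calc ∫⁻ x, ENNReal.ofReal (|x| ^ r) * ∫⁻ s, F (x + s) * ENNReal.ofReal (|s| ^ p)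
      = ∫⁻ x, ∫⁻ u, F u * ENNReal.ofReal (|u - x| ^ p * |x| ^ r) := by
        refine lintegral_congr fun x => ?_
        rw [htranslate, ← lintegral_const_mul' _ _ ENNReal.ofReal_ne_top]
        refine lintegral_congr fun u => ?_
        rw [ENNReal.ofReal_mul (by positivity)]
        ring
    _ = ∫⁻ u, F u * ∫⁻ x, ENNReal.ofReal (|u - x| ^ p * |x| ^ r) := by
        rw [lintegral_lintegral_swap (by fun_prop)]
        exact lintegral_congr fun u => lintegral_const_mul _ (by fun_prop)
    _ = ∫⁻ u, (∫⁻ v, ENNReal.ofReal (|1 - v| ^ p * |v| ^ r)) *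
          (F u * ENNReal.ofReal (|u| ^ (p + r + 1))) := by
        refine lintegral_congr_ae ((Measure.ae_ne volume 0).mono fun u hu => ?_)
        dsimp only
        rw [lintegral_abs_sub_rpow_mul_abs_rpow_s17 p r hu]
        ring
    _ = _ := lintegral_const_mul _ (by fun_prop)

theorem lintegral_fin_succ_eq_lintegral_cons {α : Type*} [MeasureSpace α]
    [SigmaFinite (volume : Measure α)] {n : ℕ} {G : (Fin (n + 1) → α) → ℝ≥0∞}
    (hG : Measurable G) : ∫⁻ l, G l = ∫⁻ x, ∫⁻ y : Fin n → α, G (Fin.cons x y) := by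
  have e := volume_preserving_piFinSuccAbove (fun _ : Fin (n + 1) => α) 0
  rw [← e.symm.lintegral_comp hG, Measure.volume_eq_prod, lintegral_prod _ (by fun_prop)]
  simp [MeasurableEquiv.piFinSuccAbove_symm_apply, Fin.insertNthEquiv]

theorem lintegral_sum_mul_prod_fin_succ {α : Type*} [MeasureSpace α]
    [SigmaFinite (volume : Measure α)] [AddCommMonoid α] [MeasurableAdd₂ α] {n : ℕ}
    {F w : α → ℝ≥0∞} (hF : Measurable F) (hw : Measurable w) :
    ∫⁻ l : Fin (n + 1) → α, F (∑ i, l i) * ∏ i, w (l i) =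
      ∫⁻ x, w x * ∫⁻ y : Fin n → α, F (x + ∑ i, y i) * ∏ i, w (y i) := by
  rw [lintegral_fin_succ_eq_lintegral_cons (by fun_prop)]
  refine lintegral_congr fun x => ?_
  rw [← lintegral_const_mul _ (by fun_prop)]
  refine lintegral_congr fun y => ?_
  simp only [Fin.sum_univ_succ, Fin.prod_univ_succ, Fin.cons_zero, Fin.cons_succ]
  ring

theorem exists_lintegral_sum_mul_prod_abs_rpow_le {r : ℝ} (hr : -1 < r) {q : ℕ} (hq : 1 ≤ q)
    (hqr : q * (1 + r) < 1) :
    ∃ C ≠ ∞, ∀ F : ℝ → ℝ≥0∞, Measurable F →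
      ∫⁻ l : Fin q → ℝ, F (∑ i, l i) * ∏ i, ENNReal.ofReal (|l i| ^ r) ≤
        C * ∫⁻ s, F s * ENNReal.ofReal (|s| ^ (q * (1 + r) - 1)) := by
  induction q, hq using Nat.le_induction with
  | base =>
    refine ⟨1, one_ne_top, fun F hF => le_of_eq ?_⟩
    rw [lintegral_sum_mul_prod_fin_succ (w := fun x => ENNReal.ofReal (|x| ^ r)) hF (by fun_prop)]
    simp [volume_pi, mul_comm]
  | succ n hn ih =>
    push_cast at hqr ⊢
    have hn' : (1 : ℝ) ≤ n := by exact_mod_cast hn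
    obtain ⟨C, hC, hCF⟩ := ih (by linarith)
    set p : ℝ := n * (1 + r) - 1
    have hB := (integrable_abs_one_sub_rpow_mul_abs_rpow (p := p) (by nlinarith) hr
      (by linarith)).lintegral_lt_top.ne
    refine ⟨C * _, mul_ne_top hC hB, fun F hF => ?_⟩
    calc ∫⁻ l : Fin (n + 1) → ℝ, F (∑ i, l i) * ∏ i, ENNReal.ofReal (|l i| ^ r)
        = ∫⁻ x, ENNReal.ofReal (|x| ^ r) *
            ∫⁻ y : Fin n → ℝ, F (x + ∑ i, y i) * ∏ i, ENNReal.ofReal (|y i| ^ r) :=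
          lintegral_sum_mul_prod_fin_succ (w := fun x => ENNReal.ofReal (|x| ^ r)) hF (by fun_prop)
      _ ≤ ∫⁻ x, ENNReal.ofReal (|x| ^ r) * (C * ∫⁻ s, F (x + s) * ENNReal.ofReal (|s| ^ p)) :=
          lintegral_mono fun x => by gcongr; exact hCF _ (hF.comp (measurable_const_add x))
      _ = C * ((∫⁻ v, ENNReal.ofReal (|1 - v| ^ p * |v| ^ r)) *
            ∫⁻ u, F u * ENNReal.ofReal (|u| ^ (p + r + 1))) := by
          simp_rw [mul_left_comm _ C]
          rw [lintegral_const_mul' _ _ hC, lintegral_abs_rpow_mul_lintegral_comp_add hF]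
      _ = _ := by
          have hexp : p + r + 1 = (n + 1) * (1 + r) - 1 := by simp only [p]; ring
          rw [mul_assoc, hexp]

theorem wavelet_spectrum_integrand_finite_general
    (d α K : ℝ) (hd' : d < 1/2) (hα : 1/2 < α) (hK : 0 ≤ K)
    (q : ℕ) (hq : 1 ≤ q) (hqd : (q : ℝ) * (1 - 2 * d) < 1) :
    (∫⁻ l : Fin q → ℝ, ENNReal.ofReal
      ((1/2 + |∑ i, l i|) ^ (-(2 * (α + K))) * ∏ i : Fin q, |l i| ^ (-(2 * d)))) < ⊤ := by
  have hq' : (1 : ℝ) ≤ q := by exact_mod_cast hq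
  obtain ⟨C, hC, hCF⟩ :=
    exists_lintegral_sum_mul_prod_abs_rpow_le (r := -(2 * d)) (by linarith) hq (by linarith)
  have hfin : ∫⁻ s, ENNReal.ofReal ((1/2 + |s|) ^ (-(2 * (α + K)))) *
      ENNReal.ofReal (|s| ^ (q * (1 + -(2 * d)) - 1)) < ⊤ :=
    lt_of_eq_of_lt (lintegral_congr fun s => (ENNReal.ofReal_mul (by positivity)).symm)
      (integrable_add_abs_rpow_mul_abs_rpow one_half_pos (by nlinarith)
        (by linarith)).lintegral_lt_top
  calc (∫⁻ l : Fin q → ℝ, ENNReal.ofReal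
        ((1/2 + |∑ i, l i|) ^ (-(2 * (α + K))) * ∏ i : Fin q, |l i| ^ (-(2 * d))))
      = ∫⁻ l : Fin q → ℝ, ENNReal.ofReal ((1/2 + |∑ i, l i|) ^ (-(2 * (α + K)))) *
          ∏ i, ENNReal.ofReal (|l i| ^ (-(2 * d))) := by
        refine lintegral_congr fun l => ?_
        rw [ENNReal.ofReal_mul (by positivity),
          ENNReal.ofReal_prod_of_nonneg fun i _ => by positivity]
    _ ≤ C * ∫⁻ s, ENNReal.ofReal ((1/2 + |s|) ^ (-(2 * (α + K)))) *
          ENNReal.ofReal (|s| ^ (q * (1 + -(2 * d)) - 1)) := hCF _ (by fun_prop)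
    _ < ⊤ := mul_lt_top hC.lt_top hfin

/-- For `d ∈ (0,1/2)`, `q ≥ 1` with `q(1-2d) < 1`, `α > 1/2` and `K ≥ 0`,
`∫_{ℝ^q} (1/2 + |λ₁+⋯+λ_q|)^{-2(α+K)} ∏ |λ_i|^{-2d} dλ < ∞`. -/
theorem wavelet_spectrum_integrand_finite
    (d α K : ℝ) (hd : 0 < d) (hd' : d < 1/2) (hα : 1/2 < α) (hK : 0 ≤ K)
    (q : ℕ) (hq : 1 ≤ q) (hqd : (q : ℝ) * (1 - 2 * d) < 1) :
    (∫⁻ l : Fin q → ℝ, ENNReal.ofReal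
      ((1/2 + |∑ i, l i|) ^ (-(2 * (α + K))) * ∏ i : Fin q, |l i| ^ (-(2 * d)))) < ⊤ :=
  wavelet_spectrum_integrand_finite_general d α K hd' hα hK q hq hqd
end
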